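/- Let R be a ring in which 2 is invertible, and suppose a - a³ = (a - a³)s(a - a³) for some s ∈ R. Then b = 1 - a is regular; explicitly b = byb where y = 3/2 - b/2 + (1-b)(1-b/2)(2s)(1-b)(1-b/2). -/

import Mathlib

noncomputable section

namespace SepExchange

variable (R : Type) [Ring R]

/-- The right annihilator `r(a)` as a right `R`-submodule of `R`. -/
def rAnn (a : R) : Submodule Rᵐᵒᵖ R where
  carrier := {x | a * x = 0}
  add_mem' := by intro x y hx hy; simp_all [Set.mem_setOf_eq, mul_add]
  zero_mem' := by simp
  smul_mem' := by
    intro c x hx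
    simp only [Set.mem_setOf_eq] at *
    rw [MulOpposite.smul_eq_mul_unop, ← mul_assoc, hx, zero_mul]

/-- The principal right ideal `aR` as a right `R`-submodule of `R`. -/
def rIdeal (a : R) : Submodule Rᵐᵒᵖ R := Submodule.span Rᵐᵒᵖ {a}

/-- The right `R`-module `a·r(a²) = {a*t : a²*t = 0}`. -/
def arAnn2 (a : R) : Submodule Rᵐᵒᵖ R where
  carrier := {x | ∃ t, x = a * t ∧ a ^ 2 * t = 0}
  add_mem' := by
    rintro x y ⟨t1, rfl, h1⟩ ⟨t2, rfl, h2⟩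
    exact ⟨t1 + t2, by rw [mul_add], by rw [mul_add, h1, h2, add_zero]⟩
  zero_mem' := ⟨0, by simp, by simp⟩
  smul_mem' := by
    rintro c x ⟨t, rfl, ht⟩
    refine ⟨t * c.unop, ?_, ?_⟩
    · simp only [MulOpposite.smul_eq_mul_unop, mul_assoc]
    · rw [← mul_assoc, ht, zero_mul]

/-- `R` is an exchange ring: for each `a` there is an idempotent `e ∈ aR`
with `1 - e ∈ (1-a)R`. -/
def ExchangeRing : Prop :=
  ∀ a : R, ∃ e : R, IsIdempotentElem e ∧ (∃ r, e = a * r) ∧ (∃ s, (1 : R) - e = (1 - a) * s)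

/-- `R` is separative: `A⊕A ≅ A⊕B ≅ B⊕B ⟹ A ≅ B` for finitely generated
projective right `R`-modules. -/
def Separative : Prop :=
  ∀ (A B : Type) [AddCommGroup A] [Module Rᵐᵒᵖ A] [AddCommGroup B] [Module Rᵐᵒᵖ B],
    Module.Finite Rᵐᵒᵖ A → Module.Projective Rᵐᵒᵖ A →
    Module.Finite Rᵐᵒᵖ B → Module.Projective Rᵐᵒᵖ B →
    Nonempty ((A × A) ≃ₗ[Rᵐᵒᵖ] (A × B)) → Nonempty ((A × B) ≃ₗ[Rᵐᵒᵖ] (B × B)) →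
    Nonempty (A ≃ₗ[Rᵐᵒᵖ] B)

/-- `a` is unit-regular. -/
def IsUnitRegular (a : R) : Prop := ∃ u : Rˣ, a = a * (u : R) * a

/-- `a` is special clean: there is an idempotent `e` with `a - e` a unit and
`aR ∩ eR = 0`. -/
def IsSpecialClean (a : R) : Prop :=
  ∃ e : R, IsIdempotentElem e ∧ IsUnit (a - e) ∧ rIdeal R a ⊓ rIdeal R e = ⊥

/-- `A ≲⊕ B`: `A` is isomorphic to a direct summand of `B` (right `R`-modules). -/
def SummandOf (A B : Type) [AddCommGroup A] [Module Rᵐᵒᵖ A]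
    [AddCommGroup B] [Module Rᵐᵒᵖ B] : Prop :=
  ∃ N N' : Submodule Rᵐᵒᵖ B, IsCompl N N' ∧ Nonempty (A ≃ₗ[Rᵐᵒᵖ] ↥N)

/-- `A ∝ B`: `A` is isomorphic to a direct summand of a finite direct sum of
copies of `B`. -/
def Propto (A B : Type) [AddCommGroup A] [Module Rᵐᵒᵖ A]
    [AddCommGroup B] [Module Rᵐᵒᵖ B] : Prop :=
  ∃ m : ℕ, 0 < m ∧ SummandOf R A (Fin m → B)

end SepExchange

/-!
With `a = 1 - b` and `y₀ = (3 - b)/2`, the defect `x = b - b y₀ b` equals `(a - a³)/2`, which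
factors as `b p = p b` with `p = a (1 + a)/2 = (1 - b)(1 - b/2)`. A defect of this shape that is
itself regular, `x = x s' x`, is absorbed into the inner inverse:
`b = b y₀ b + (b p) s' (p b) = b (y₀ + p s' p) b`. Here `x = (a - a³)/2` has inner inverse `2 s`.
-/

open scoped IsMulCommutative in
theorem Commute.sub_mul_mul_eq_of_two_mul_eq_one {R : Type*} [Ring R] {b c : R} (hbc : Commute b c)
    (hc : 2 * c = 1) :
    b - b * (3 * c - b * c) * b = b * ((1 - b) * (1 - b * c)) ∧
      b - b * (3 * c - b * c) * b = c * ((1 - b) - (1 - b) ^ 3) := by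
  -- `b` and `c` generate a commutative subring, where these are ring identities modulo `2 c = 1`.
  have := Subring.isMulCommutative_closure (s := {b, c}) (by
    simp only [Set.mem_insert_iff, Set.mem_singleton_iff]
    rintro x (rfl | rfl) y (rfl | rfl) <;> first | rfl | exact hbc.eq | exact hbc.eq.symm)
  let B : Subring.closure {b, c} := ⟨b, Subring.subset_closure (by simp)⟩
  let C : Subring.closure {b, c} := ⟨c, Subring.subset_closure (by simp)⟩
  have hC : 2 * C = 1 := Subtype.ext hc
  constructor
  · exact congrArg Subtype.val (show B - B * (3 * C - B * C) * B = B * ((1 - B) * (1 - B * C)) by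
      linear_combination (-B ^ 2) * hC)
  · exact congrArg Subtype.val (show B - B * (3 * C - B * C) * B = C * ((1 - B) - (1 - B) ^ 3) by
      linear_combination (-B) * hC)

theorem eq_mul_add_mul_mul_mul_of_sub_eq {R : Type*} [Ring R] {b y₀ p q s : R}
    (hp : b - b * y₀ * b = b * p) (hq : b - b * y₀ * b = q * b)
    (hs : b - b * y₀ * b = (b - b * y₀ * b) * s * (b - b * y₀ * b)) :
    b = b * (y₀ + p * s * q) * b := by
  calc b = b * y₀ * b + (b - b * y₀ * b) := by abel
    _ = b * y₀ * b + b * p * s * (q * b) := by rw [hs]; nth_rw 1 [hp]; rw [hq]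
    _ = b * (y₀ + p * s * q) * b := by noncomm_ring

theorem invOf_mul_eq_mul_mul {R : Type*} [Ring R] {u z s : R} [Invertible u]
    (hu : ∀ r, Commute u r) (h : z = z * s * z) :
    ⅟u * z = ⅟u * z * (u * s) * (⅟u * z) := by
  have hzs : ⅟u * z * (u * s) = z * s := by
    rw [mul_assoc, ← mul_assoc z, ← (hu z).eq, ← mul_assoc, ← mul_assoc, invOf_mul_self, one_mul]
  rw [hzs, ← mul_assoc, ← ((hu (z * s)).invOf_left).eq, mul_assoc, ← h]

open SepExchange in
/-- If `2` is invertible and `a - a³` is regular with inner inverse `s`, then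
`b = 1 - a` is regular with inner inverse
`3/2 - b/2 + (1-b)(1-b/2)(2s)(1-b)(1-b/2)`. -/
theorem stmt1 (R : Type) [Ring R] [Invertible (2 : R)] (a s : R)
    (h : a - a ^ 3 = (a - a ^ 3) * s * (a - a ^ 3)) (b : R) (hb : b = 1 - a) :
    b = b * ((3 : R) * ⅟(2 : R) - b * ⅟(2 : R) +
      (1 - b) * (1 - b * ⅟(2 : R)) * (2 * s) * (1 - b) * (1 - b * ⅟(2 : R))) * b := by
  obtain rfl : a = 1 - b := by rw [hb, sub_sub_cancel]
  have hc : ∀ r : R, Commute (⅟2) r := fun r => (Commute.ofNat_left 2 r).invOf_left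
  set c : R := ⅟2
  have hbp : Commute b ((1 - b) * (1 - b * c)) :=
    ((Commute.one_right b).sub_right (.refl b)).mul_right
      ((Commute.one_right b).sub_right ((Commute.refl b).mul_right (hc b).symm))
  obtain ⟨hp, hz⟩ := (hc b).symm.sub_mul_mul_eq_of_two_mul_eq_one (mul_invOf_self 2)
  have hs := invOf_mul_eq_mul_mul (Commute.ofNat_left 2) h
  rw [← hz] at hs
  simpa only [mul_assoc] using eq_mul_add_mul_mul_mul_of_sub_eq hp (hp.trans hbp.eq) hs
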